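/- arXiv:1903.11926 — 5 statements merged into one kernel-verified Lean document; each statement's English description precedes it below -/
import Mathlib

section
/- Let α : X → Y be a function between GF-spaces (X,ℱ) and (Y,𝒢), where level n of 𝒢 is Δ_n = α(Γ_n) = {α(A) : A ∈ Γ_n} (indexed by Γ_n), and let F ⊆ Y. Then the lower (resp. upper) fractal dimension I of F with respect to 𝒢 equals the lower (resp. upper) fractal dimension I of α⁻¹(F) with respect to ℱ. In particular, dim¹_𝒢(F) exists if and only if dim¹_ℱ(α⁻¹(F)) exists, and then dim¹_𝒢(F) = dim¹_ℱ(α⁻¹(F)). -/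
open Filter Set MeasureTheory
open scoped ENNReal NNReal Topology

/-- A fractal structure on `X`: a countable family of coverings (levels, given as indexed
families so that sets may appear with multiplicity) such that each level refines the previous
one and every element of a level is the union of the elements of the next level contained
in it. -/
def IsFractalStructure {X : Type*} {ι : ℕ → Type*} (Γ : ∀ n : ℕ, ι n → Set X) : Prop :=
  (∀ n : ℕ, (⋃ i, Γ n i) = Set.univ) ∧
  (∀ (n : ℕ) (i : ι (n + 1)), ∃ j : ι n, Γ (n + 1) i ⊆ Γ n j) ∧
  (∀ (n : ℕ) (j : ι n), Γ n j = ⋃ i ∈ {i : ι (n + 1) | Γ (n + 1) i ⊆ Γ n j}, Γ (n + 1) i)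

/-- `N_n(F)`: the number of elements (counted with multiplicity) of level `n` meeting `F`. -/
noncomputable def Ncount {X : Type*} {ι : ℕ → Type*} (Γ : ∀ n : ℕ, ι n → Set X) (n : ℕ)
    (F : Set X) : ℕ :=
  Nat.card {i : ι n // (Γ n i ∩ F).Nonempty}

/-- The lower fractal dimension I of `F` with respect to the fractal structure `Γ`:
`liminf_n log N_n(F) / (n log 2)`. -/
noncomputable def dim1Lower {X : Type*} {ι : ℕ → Type*} (Γ : ∀ n : ℕ, ι n → Set X)
    (F : Set X) : ℝ :=
  Filter.liminf (fun n : ℕ => Real.log (Ncount Γ n F) / (n * Real.log 2)) Filter.atTop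

/-- The upper fractal dimension I of `F` with respect to the fractal structure `Γ`. -/
noncomputable def dim1Upper {X : Type*} {ι : ℕ → Type*} (Γ : ∀ n : ℕ, ι n → Set X)
    (F : Set X) : ℝ :=
  Filter.limsup (fun n : ℕ => Real.log (Ncount Γ n F) / (n * Real.log 2)) Filter.atTop

/-- `diam (F, Γ_n)`: the sup of the diameters of the level-`n` elements meeting `F`. -/
noncomputable def famDiam {X : Type*} [PseudoMetricSpace X] {ι : ℕ → Type*}
    (Γ : ∀ n : ℕ, ι n → Set X) (n : ℕ) (F : Set X) : ℝ :=
  ⨆ i : {i : ι n // (Γ n i ∩ F).Nonempty}, Metric.diam (Γ n i.1)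

/-- `diam (Γ_n)`: the sup of the diameters of the level-`n` elements. -/
noncomputable def levelDiam {X : Type*} [PseudoMetricSpace X] {ι : ℕ → Type*}
    (Γ : ∀ n : ℕ, ι n → Set X) (n : ℕ) : ℝ :=
  ⨆ i : ι n, Metric.diam (Γ n i)

/-- The lower fractal dimension II of `F` with respect to the fractal structure `Γ`:
`liminf_n log N_n(F) / (-log diam (F, Γ_n))`. -/
noncomputable def dim2Lower {X : Type*} [PseudoMetricSpace X] {ι : ℕ → Type*}
    (Γ : ∀ n : ℕ, ι n → Set X) (F : Set X) : ℝ :=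
  Filter.liminf (fun n : ℕ => Real.log (Ncount Γ n F) / (-Real.log (famDiam Γ n F)))
    Filter.atTop

/-- The upper fractal dimension II of `F` with respect to the fractal structure `Γ`. -/
noncomputable def dim2Upper {X : Type*} [PseudoMetricSpace X] {ι : ℕ → Type*}
    (Γ : ∀ n : ℕ, ι n → Set X) (F : Set X) : ℝ :=
  Filter.limsup (fun n : ℕ => Real.log (Ncount Γ n F) / (-Real.log (famDiam Γ n F)))
    Filter.atTop

/-- `H^s_{n,3}(F) = inf { Σ_{A ∈ 𝒜_l(F)} diam(A)^s : l ≥ n }`. -/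
noncomputable def H3n {X : Type*} [PseudoMetricSpace X] {ι : ℕ → Type*}
    (Γ : ∀ n : ℕ, ι n → Set X) (n : ℕ) (F : Set X) (s : ℝ) : ℝ≥0∞ :=
  ⨅ l ∈ {l : ℕ | n ≤ l},
    ∑' i : {i : ι l // (Γ l i ∩ F).Nonempty}, ENNReal.ofReal (Metric.diam (Γ l i.1) ^ s)

/-- `H^s_3(F) = lim_n H^s_{n,3}(F)` (the sequence is nondecreasing in `n`, so the limit is
the supremum). -/
noncomputable def H3 {X : Type*} [PseudoMetricSpace X] {ι : ℕ → Type*}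
    (Γ : ∀ n : ℕ, ι n → Set X) (F : Set X) (s : ℝ) : ℝ≥0∞ :=
  ⨆ n : ℕ, H3n Γ n F s

/-- Fractal dimension III: the critical exponent of `s ↦ H^s_3(F)`. -/
noncomputable def dim3 {X : Type*} [PseudoMetricSpace X] {ι : ℕ → Type*}
    (Γ : ∀ n : ℕ, ι n → Set X) (F : Set X) : ℝ≥0∞ :=
  ⨆ (s : ℝ≥0) (_ : H3 Γ F (s : ℝ) = ∞), (s : ℝ≥0∞)

/-- `H^s_{n,4}(F)`: infimum of `Σ diam(A_i)^s` over finite coverings of `F` by elements of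
levels `≥ n`. -/
noncomputable def H4n {X : Type*} [PseudoMetricSpace X] {ι : ℕ → Type*}
    (Γ : ∀ n : ℕ, ι n → Set X) (n : ℕ) (F : Set X) (s : ℝ) : ℝ≥0∞ :=
  ⨅ (U : Set (Σ l : ℕ, ι l)) (_ : U.Finite) (_ : ∀ p ∈ U, n ≤ p.1)
      (_ : F ⊆ ⋃ p ∈ U, Γ p.1 p.2),
    ∑' p : U, ENNReal.ofReal (Metric.diam (Γ p.1.1 p.1.2) ^ s)

/-- `H^s_4(F) = lim_n H^s_{n,4}(F)`. -/
noncomputable def H4 {X : Type*} [PseudoMetricSpace X] {ι : ℕ → Type*}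
    (Γ : ∀ n : ℕ, ι n → Set X) (F : Set X) (s : ℝ) : ℝ≥0∞ :=
  ⨆ n : ℕ, H4n Γ n F s

/-- Fractal dimension IV: the critical exponent of `s ↦ H^s_4(F)`. -/
noncomputable def dim4 {X : Type*} [PseudoMetricSpace X] {ι : ℕ → Type*}
    (Γ : ∀ n : ℕ, ι n → Set X) (F : Set X) : ℝ≥0∞ :=
  ⨆ (s : ℝ≥0) (_ : H4 Γ F (s : ℝ) = ∞), (s : ℝ≥0∞)

/-- `H^s_{n,5}(F)`: infimum of `Σ diam(A_i)^s` over countable coverings of `F` by elements of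
levels `≥ n`. -/
noncomputable def H5n {X : Type*} [PseudoMetricSpace X] {ι : ℕ → Type*}
    (Γ : ∀ n : ℕ, ι n → Set X) (n : ℕ) (F : Set X) (s : ℝ) : ℝ≥0∞ :=
  ⨅ (U : Set (Σ l : ℕ, ι l)) (_ : U.Countable) (_ : ∀ p ∈ U, n ≤ p.1)
      (_ : F ⊆ ⋃ p ∈ U, Γ p.1 p.2),
    ∑' p : U, ENNReal.ofReal (Metric.diam (Γ p.1.1 p.1.2) ^ s)

/-- `H^s_5(F) = lim_n H^s_{n,5}(F)`. -/
noncomputable def H5 {X : Type*} [PseudoMetricSpace X] {ι : ℕ → Type*}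
    (Γ : ∀ n : ℕ, ι n → Set X) (F : Set X) (s : ℝ) : ℝ≥0∞ :=
  ⨆ n : ℕ, H5n Γ n F s

/-- Fractal dimension V: the critical exponent of `s ↦ H^s_5(F)`. -/
noncomputable def dim5 {X : Type*} [PseudoMetricSpace X] {ι : ℕ → Type*}
    (Γ : ∀ n : ℕ, ι n → Set X) (F : Set X) : ℝ≥0∞ :=
  ⨆ (s : ℝ≥0) (_ : H5 Γ F (s : ℝ) = ∞), (s : ℝ≥0∞)

/-- The κ-condition: there is `κ ∈ ℕ` such that, for every `n`, any set of diameter at most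
`diam (Γ_n)` meets at most `κ` elements of level `n`. -/
def KCondition {X : Type*} [PseudoMetricSpace X] {ι : ℕ → Type*}
    (Γ : ∀ n : ℕ, ι n → Set X) : Prop :=
  ∃ κ : ℕ, ∀ (n : ℕ) (A : Set X), Metric.diam A ≤ levelDiam Γ n →
    {i : ι n | (Γ n i ∩ A).Nonempty}.encard ≤ (κ : ℕ∞)

/-- Finitely splitting: there is `κ' ∈ ℕ` bounding the number of elements of level `n+1`
contained in any element of level `n`. -/
def FinitelySplitting {X : Type*} {ι : ℕ → Type*} (Γ : ∀ n : ℕ, ι n → Set X) : Prop :=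
  ∃ κ' : ℕ, ∀ (n : ℕ) (j : ι n), {i : ι (n + 1) | Γ (n + 1) i ⊆ Γ n j}.encard ≤ (κ' : ℕ∞)

/-- The unit cube `[0,1]^d`. -/
def unitCube (d : ℕ) : Set (Fin d → ℝ) := Set.Icc 0 1

/-- The dyadic cube `∏_j [k_j/2^n, (k_j+1)/2^n]` inside `[0,1]^d`. -/
def dyadicCube (d n : ℕ) (k : Fin d → ℕ) : Set ↥(unitCube d) :=
  {y : ↥(unitCube d) |
    ∀ j : Fin d, (k j : ℝ) / 2 ^ n ≤ y.1 j ∧ y.1 j ≤ ((k j : ℝ) + 1) / 2 ^ n}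

/-- `Δ` is (as a family of sets) the natural fractal structure on `[0,1]^d`: its level `n`
consists exactly of the dyadic cubes of generation `n`. -/
def IsNaturalOnCube {d : ℕ} {ι : ℕ → Type*} (Δ : ∀ n : ℕ, ι n → Set ↥(unitCube d)) : Prop :=
  ∀ n : ℕ, Set.range (Δ n) =
    {C : Set ↥(unitCube d) | ∃ k : Fin d → ℕ, (∀ j, k j < 2 ^ n) ∧ C = dyadicCube d n k}

/-- `N_δ(F)`: the number of cubes of the grid of side `δ` in `ℝ^d` that meet `F`. -/
noncomputable def gridCount (d : ℕ) (F : Set (Fin d → ℝ)) (δ : ℝ) : ℕ :=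
  Nat.card {k : Fin d → ℤ | ∃ x ∈ F, ∀ j, (k j : ℝ) * δ ≤ x j ∧ x j ≤ ((k j : ℝ) + 1) * δ}

/-- The lower box dimension of `F ⊆ ℝ^d` (via grid counting). -/
noncomputable def gridBoxLower (d : ℕ) (F : Set (Fin d → ℝ)) : ℝ :=
  Filter.liminf (fun δ : ℝ => Real.log (gridCount d F δ) / (-Real.log δ)) (𝓝[>] (0 : ℝ))

/-- The upper box dimension of `F ⊆ ℝ^d` (via grid counting). -/
noncomputable def gridBoxUpper (d : ℕ) (F : Set (Fin d → ℝ)) : ℝ :=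
  Filter.limsup (fun δ : ℝ => Real.log (gridCount d F δ) / (-Real.log δ)) (𝓝[>] (0 : ℝ))

/-- `N_δ(F)` for `F ⊆ ℝ`: the number of intervals of the grid of side `δ` that meet `F`. -/
noncomputable def gridCount1 (F : Set ℝ) (δ : ℝ) : ℕ :=
  Nat.card {k : ℤ | ∃ x ∈ F, (k : ℝ) * δ ≤ x ∧ x ≤ ((k : ℝ) + 1) * δ}

/-- The lower box dimension of `F ⊆ ℝ` (via grid counting). -/
noncomputable def gridBox1Lower (F : Set ℝ) : ℝ :=
  Filter.liminf (fun δ : ℝ => Real.log (gridCount1 F δ) / (-Real.log δ)) (𝓝[>] (0 : ℝ))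

/-- The upper box dimension of `F ⊆ ℝ` (via grid counting). -/
noncomputable def gridBox1Upper (F : Set ℝ) : ℝ :=
  Filter.limsup (fun δ : ℝ => Real.log (gridCount1 F δ) / (-Real.log δ)) (𝓝[>] (0 : ℝ))

/-- `N_δ(F)`: the smallest number of sets of diameter at most `δ` needed to cover `F`. -/
noncomputable def coverCount {X : Type*} [PseudoMetricSpace X] (F : Set X) (δ : ℝ) : ℕ :=
  sInf {m : ℕ | ∃ U : Fin m → Set X, (∀ i, Metric.diam (U i) ≤ δ) ∧ F ⊆ ⋃ i, U i}

/-- The lower box dimension of a subset of a metric space. -/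
noncomputable def boxDimLower {X : Type*} [PseudoMetricSpace X] (F : Set X) : ℝ :=
  Filter.liminf (fun δ : ℝ => Real.log (coverCount F δ) / (-Real.log δ)) (𝓝[>] (0 : ℝ))

/-- The upper box dimension of a subset of a metric space. -/
noncomputable def boxDimUpper {X : Type*} [PseudoMetricSpace X] (F : Set X) : ℝ :=
  Filter.limsup (fun δ : ℝ => Real.log (coverCount F δ) / (-Real.log δ)) (𝓝[>] (0 : ℝ))

/-- the (lower/upper) fractal dimension I of `F` with respect to the image
fractal structure `𝒢 = α(ℱ)` equals the (lower/upper) fractal dimension I of `α⁻¹(F)` with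
respect to `ℱ`; in particular one exists iff the other does, and then they are equal. -/
theorem dim1_image_eq_dim1_preimage {X Y : Type*} {ι : ℕ → Type*}
    (Γ : ∀ n : ℕ, ι n → Set X) (α : X → Y)
    (hΓ : IsFractalStructure Γ)
    (hΔ : IsFractalStructure (fun n i => α '' Γ n i))
    (F : Set Y) :
    dim1Lower (fun n i => α '' Γ n i) F = dim1Lower Γ (α ⁻¹' F) ∧
    dim1Upper (fun n i => α '' Γ n i) F = dim1Upper Γ (α ⁻¹' F) := by
  have h : ∀ n, Ncount (fun n i => α '' Γ n i) n F = Ncount Γ n (α ⁻¹' F) := by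
    intro n
    unfold Ncount
    apply Nat.card_congr
    apply Equiv.subtypeEquivRight
    intro i
    constructor
    · rintro ⟨y, ⟨x, hx, rfl⟩, hy⟩; exact ⟨x, hx, hy⟩
    · rintro ⟨x, hx, hy⟩; exact ⟨α x, ⟨x, hx, rfl⟩, hy⟩
  constructor
  · unfold dim1Lower; simp only [h]
  · unfold dim1Upper; simp only [h]
end

section
/- Let X, Y be metric spaces and α : X → Y a function between GF-spaces (X,ℱ) and (Y,𝒢) satisfying the Main hypotheses with c > 0. Then for every F ⊆ Y and every s ≥ 0, H^s_3(α⁻¹(F)) = (1/c^s)·H^{ds}_3(F), where H^s_3 is computed with respect to ℱ on the left and H^{ds}_3 with respect to 𝒢 on the right. -/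
open Filter Set MeasureTheory
open scoped ENNReal NNReal Topology

/-- under the Main hypotheses with `c > 0`, for every `F ⊆ Y` and `s ≥ 0`,
`H^s_3(α⁻¹(F)) = (1/c^s) · H^{ds}_3(F)`. -/
theorem H3_preimage_eq {X Y : Type*} [MetricSpace X] [MetricSpace Y] {ι : ℕ → Type*}
    (Γ : ∀ n : ℕ, ι n → Set X) (α : X → Y)
    (hΓ : IsFractalStructure Γ)
    (hΔ : IsFractalStructure (fun n i => α '' Γ n i))
    (c d : ℝ) (hc : 0 < c)
    (hdiam : ∀ (n : ℕ) (i : ι n), Metric.diam (α '' Γ n i) ^ d = c * Metric.diam (Γ n i))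
    (F : Set Y) (s : ℝ) (hs : 0 ≤ s) :
    H3 Γ (α ⁻¹' F) s =
      ENNReal.ofReal (1 / c ^ s) * H3 (fun n i => α '' Γ n i) F (d * s) := by

  set k := ENNReal.ofReal (1 / c ^ s) with hk
  have hcs : (0:ℝ) < c ^ s := Real.rpow_pos_of_pos hc s
  have hk0 : k ≠ 0 := by
    rw [hk]
    simp [ENNReal.ofReal_eq_zero, not_le, hcs]
  have hkT : k ≠ ∞ := ENNReal.ofReal_ne_top
  have key : ∀ (l : ℕ) (i : ι l), ENNReal.ofReal (Metric.diam (Γ l i) ^ s) =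
      k * ENNReal.ofReal (Metric.diam (α '' Γ l i) ^ (d * s)) := by
    intro l i
    rw [hk, ← ENNReal.ofReal_mul (by positivity)]
    congr 1
    rw [Real.rpow_mul Metric.diam_nonneg, hdiam,
      Real.mul_rpow hc.le Metric.diam_nonneg, one_div,
      inv_mul_cancel_left₀ (ne_of_gt hcs)]
  have hpred : ∀ (l : ℕ) (i : ι l),
      (Γ l i ∩ α ⁻¹' F).Nonempty ↔ ((α '' Γ l i) ∩ F).Nonempty := by
    intro l i
    constructor
    · rintro ⟨x, hx, hxF⟩
      exact ⟨α x, ⟨x, hx, rfl⟩, hxF⟩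
    · rintro ⟨y, ⟨x, hx, rfl⟩, hyF⟩
      exact ⟨x, hx, hyF⟩
  have hsum : ∀ l : ℕ,
      (∑' i : {i : ι l // (Γ l i ∩ α ⁻¹' F).Nonempty},
        ENNReal.ofReal (Metric.diam (Γ l i.1) ^ s)) =
      k * ∑' i : {i : ι l // ((α '' Γ l i) ∩ F).Nonempty},
        ENNReal.ofReal (Metric.diam (α '' Γ l i.1) ^ (d * s)) := by
    intro l
    calc (∑' i : {i : ι l // (Γ l i ∩ α ⁻¹' F).Nonempty},
            ENNReal.ofReal (Metric.diam (Γ l i.1) ^ s))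
        = ∑' i : {i : ι l // (Γ l i ∩ α ⁻¹' F).Nonempty},
            k * ENNReal.ofReal (Metric.diam (α '' Γ l i.1) ^ (d * s)) :=
          tsum_congr fun i => key l i.1
      _ = ∑' i : {i : ι l // ((α '' Γ l i) ∩ F).Nonempty},
            k * ENNReal.ofReal (Metric.diam (α '' Γ l i.1) ^ (d * s)) :=
          (Equiv.subtypeEquivRight (hpred l)).tsum_eq
            (fun i : {i : ι l // ((α '' Γ l i) ∩ F).Nonempty} =>
              k * ENNReal.ofReal (Metric.diam (α '' Γ l i.1) ^ (d * s)))
      _ = k * ∑' i : {i : ι l // ((α '' Γ l i) ∩ F).Nonempty},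
            ENNReal.ofReal (Metric.diam (α '' Γ l i.1) ^ (d * s)) :=
          ENNReal.tsum_mul_left
  have hH3n : ∀ n : ℕ, H3n Γ n (α ⁻¹' F) s =
      k * H3n (fun n i => α '' Γ n i) n F (d * s) := by
    intro n
    unfold H3n
    rw [ENNReal.mul_iInf_of_ne hk0 hkT]
    refine iInf_congr fun l => ?_
    rw [ENNReal.mul_iInf_of_ne hk0 hkT]
    exact iInf_congr fun _ => hsum l
  unfold H3
  rw [ENNReal.mul_iSup]
  exact iSup_congr hH3n
end

section
/- Let X, Y be metric spaces and α : X → Y a function between GF-spaces (X,ℱ) and (Y,𝒢) satisfying the Main hypotheses with c > 0 and d > 0. Then for every F ⊆ Y, dim³_𝒢(F) = d·dim³_ℱ(α⁻¹(F)). -/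
open Filter Set MeasureTheory
open scoped ENNReal NNReal Topology

/-- under the Main hypotheses with `c > 0` and `d > 0`, for every `F ⊆ Y`,
`dim³_𝒢(F) = d · dim³_ℱ(α⁻¹(F))`. -/
theorem dim3_image_eq_dim3_preimage {X Y : Type*} [MetricSpace X] [MetricSpace Y]
    {ι : ℕ → Type*} (Γ : ∀ n : ℕ, ι n → Set X) (α : X → Y)
    (hΓ : IsFractalStructure Γ)
    (hΔ : IsFractalStructure (fun n i => α '' Γ n i))
    (c d : ℝ) (hc : 0 < c) (hd : 0 < d)
    (hdiam : ∀ (n : ℕ) (i : ι n), Metric.diam (α '' Γ n i) ^ d = c * Metric.diam (Γ n i))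
    (F : Set Y) :
    dim3 (fun n i => α '' Γ n i) F = ENNReal.ofReal d * dim3 Γ (α ⁻¹' F) := by
  classical
  set G := α ⁻¹' F with hG
  set k : ℝ → ℝ≥0∞ := fun s => ENNReal.ofReal (c ^ (s / d)) with hk
  have hk0 : ∀ s, k s ≠ 0 := fun s => by
    simp [hk, ENNReal.ofReal_eq_zero, not_le, Real.rpow_pos_of_pos hc]
  have hktop : ∀ s, k s ≠ ∞ := fun s => ENNReal.ofReal_ne_top
  -- pointwise diameter relation
  have hdiam' : ∀ (n : ℕ) (i : ι n) (s : ℝ),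
      Metric.diam (α '' Γ n i) ^ s =
        c ^ (s / d) * Metric.diam (Γ n i) ^ (s / d) := by
    intro n i s
    have h1 : Metric.diam (α '' Γ n i) = (c * Metric.diam (Γ n i)) ^ d⁻¹ := by
      rw [← hdiam n i, Real.rpow_rpow_inv Metric.diam_nonneg hd.ne']
    rw [h1, ← Real.rpow_mul (mul_nonneg hc.le Metric.diam_nonneg),
      Real.mul_rpow hc.le Metric.diam_nonneg, inv_mul_eq_div]
  -- the nonempty-intersection predicates agree
  have hpred : ∀ (l : ℕ) (i : ι l),
      ((α '' Γ l i) ∩ F).Nonempty ↔ (Γ l i ∩ G).Nonempty := fun l i =>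
    Set.image_inter_nonempty_iff
  -- sums agree up to the constant
  have hsum : ∀ (l : ℕ) (s : ℝ),
      (∑' i : {i : ι l // ((α '' Γ l i) ∩ F).Nonempty},
          ENNReal.ofReal (Metric.diam (α '' Γ l i.1) ^ s)) =
        k s * ∑' i : {i : ι l // (Γ l i ∩ G).Nonempty},
          ENNReal.ofReal (Metric.diam (Γ l i.1) ^ (s / d)) := by
    intro l s
    rw [← ENNReal.tsum_mul_left]
    refine ((Equiv.subtypeEquivRight fun i => (hpred l i).symm).tsum_eq
      (fun i : {i : ι l // ((α '' Γ l i) ∩ F).Nonempty} =>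
        ENNReal.ofReal (Metric.diam (α '' Γ l i.1) ^ s))).symm.trans (tsum_congr ?_)
    intro i
    simp only [Equiv.subtypeEquivRight_apply]
    rw [hdiam' l i.1 s, ENNReal.ofReal_mul (Real.rpow_nonneg hc.le _)]
  -- H3n agree up to the constant
  have hH3n : ∀ (n : ℕ) (s : ℝ),
      H3n (fun n i => α '' Γ n i) n F s = k s * H3n Γ n G (s / d) := by
    intro n s
    unfold H3n
    rw [iInf_subtype', iInf_subtype',
      ENNReal.mul_iInf' (fun h => absurd h (hktop s))
        (fun _ => ⟨⟨n, le_refl n⟩⟩)]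
    exact iInf_congr fun l => hsum l.1 s
  -- H3 agree up to the constant
  have hH3 : ∀ s : ℝ,
      H3 (fun n i => α '' Γ n i) F s = k s * H3 Γ G (s / d) := by
    intro s
    unfold H3
    rw [ENNReal.mul_iSup]
    exact iSup_congr fun n => hH3n n s
  have hiff : ∀ s : ℝ,
      H3 (fun n i => α '' Γ n i) F s = ∞ ↔ H3 Γ G (s / d) = ∞ := by
    intro s
    rw [hH3 s, ENNReal.mul_eq_top]
    constructor
    · rintro (⟨-, h⟩ | ⟨h, -⟩)
      · exact h
      · exact absurd h (hktop s)
    · exact fun h => Or.inl ⟨hk0 s, h⟩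
  -- final sup juggling
  unfold dim3
  rw [ENNReal.mul_iSup]
  apply le_antisymm
  · refine iSup_le fun s => iSup_le fun hs => ?_
    have ht : H3 Γ G ((s : ℝ) / d) = ∞ := (hiff s).mp hs
    set t : ℝ≥0 := ⟨(s : ℝ) / d, div_nonneg s.2 hd.le⟩ with htdef
    have hst : ENNReal.ofReal d * (t : ℝ≥0∞) = (s : ℝ≥0∞) := by
      rw [← ENNReal.ofReal_coe_nnreal, ← ENNReal.ofReal_coe_nnreal,
        ← ENNReal.ofReal_mul hd.le]
      congr 1
      show d * ((s : ℝ) / d) = (s : ℝ)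
      field_simp
    calc (s : ℝ≥0∞) = ENNReal.ofReal d * (t : ℝ≥0∞) := hst.symm
      _ ≤ ENNReal.ofReal d * ⨆ (_ : H3 Γ G (t : ℝ) = ∞), (t : ℝ≥0∞) := by
          refine mul_le_mul_right (le_iSup_iff.mpr fun b hb => ?_) _
          exact hb ht
      _ ≤ _ := le_iSup_of_le t le_rfl
  · refine iSup_le fun t => ?_
    rw [ENNReal.mul_iSup]
    refine iSup_le fun ht => ?_
    set s : ℝ≥0 := ⟨d * (t : ℝ), mul_nonneg hd.le t.2⟩ with hsdef
    have hsd : (s : ℝ) / d = (t : ℝ) := by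
      show d * (t : ℝ) / d = (t : ℝ)
      field_simp
    have hs : H3 (fun n i => α '' Γ n i) F (s : ℝ) = ∞ := by
      rw [hiff, hsd]; exact ht
    have hst : ENNReal.ofReal d * (t : ℝ≥0∞) = (s : ℝ≥0∞) := by
      rw [← ENNReal.ofReal_coe_nnreal, ← ENNReal.ofReal_coe_nnreal,
        ← ENNReal.ofReal_mul hd.le]
      rfl
    rw [hst]
    exact le_iSup_of_le s (le_iSup_of_le hs le_rfl)
end

section
/- Let X, Y be metric spaces and α : X → Y a function between GF-spaces (X,ℱ) and (Y,𝒢) satisfying the Main hypotheses with c > 0. Then for every F ⊆ Y and every s ≥ 0, (1/c^s)·H^{ds}_5(F) ≤ H^s_5(α⁻¹(F)), where H^s_5 is computed with respect to ℱ on the right and H^{ds}_5 with respect to 𝒢 on the left. -/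
open Filter Set MeasureTheory
open scoped ENNReal NNReal Topology

/-- under the Main hypotheses with `c > 0`, for every `F ⊆ Y` and `s ≥ 0`,
`(1/c^s) · H^{ds}_5(F) ≤ H^s_5(α⁻¹(F))`. -/
theorem H5_preimage_ge {X Y : Type*} [MetricSpace X] [MetricSpace Y] {ι : ℕ → Type*}
    (Γ : ∀ n : ℕ, ι n → Set X) (α : X → Y)
    (hΓ : IsFractalStructure Γ)
    (hΔ : IsFractalStructure (fun n i => α '' Γ n i))
    (c d : ℝ) (hc : 0 < c)
    (hdiam : ∀ (n : ℕ) (i : ι n), Metric.diam (α '' Γ n i) ^ d = c * Metric.diam (Γ n i))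
    (F : Set Y) (s : ℝ) (hs : 0 ≤ s) :
    ENNReal.ofReal (1 / c ^ s) * H5 (fun n i => α '' Γ n i) F (d * s) ≤
      H5 Γ (α ⁻¹' F) s := by
  have hsur : Function.Surjective α := by
    intro y
    have h0 := hΔ.1 0
    have hy : y ∈ ⋃ i, α '' Γ 0 i := h0 ▸ Set.mem_univ y
    simp only [Set.mem_iUnion, Set.mem_image] at hy
    obtain ⟨i, x, _, hx⟩ := hy
    exact ⟨x, hx⟩
  have hcs : (0:ℝ) < c ^ s := Real.rpow_pos_of_pos hc s
  rw [H5, H5, ENNReal.mul_iSup]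
  refine iSup_le fun n => le_iSup_of_le n ?_
  rw [H5n]
  refine le_iInf fun U => le_iInf fun hUc => le_iInf fun hUn => le_iInf fun hUcov => ?_
  have hcov : F ⊆ ⋃ p ∈ U, α '' Γ p.1 p.2 := by
    intro y hy
    obtain ⟨x, rfl⟩ := hsur y
    have hx : x ∈ α ⁻¹' F := hy
    obtain ⟨p, hpU, hxp⟩ := Set.mem_iUnion₂.1 (hUcov hx)
    exact Set.mem_biUnion hpU ⟨x, hxp, rfl⟩
  have h1 : H5n (fun n i => α '' Γ n i) n F (d * s) ≤
      ∑' p : U, ENNReal.ofReal (Metric.diam (α '' Γ p.1.1 p.1.2) ^ (d * s)) :=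
    iInf_le_of_le U (iInf_le_of_le hUc <| iInf_le_of_le hUn <| iInf_le_of_le hcov le_rfl)
  have key : ∀ p : U, ENNReal.ofReal (Metric.diam (α '' Γ p.1.1 p.1.2) ^ (d * s))
      = ENNReal.ofReal (c ^ s) * ENNReal.ofReal (Metric.diam (Γ p.1.1 p.1.2) ^ s) := by
    intro p
    rw [Real.rpow_mul Metric.diam_nonneg, hdiam, Real.mul_rpow hc.le Metric.diam_nonneg,
      ENNReal.ofReal_mul hcs.le]
  calc ENNReal.ofReal (1 / c ^ s) * H5n (fun n i => α '' Γ n i) n F (d * s)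
      ≤ ENNReal.ofReal (1 / c ^ s) *
        ∑' p : U, ENNReal.ofReal (Metric.diam (α '' Γ p.1.1 p.1.2) ^ (d * s)) :=
        mul_le_mul_right h1 _
    _ = ∑' p : U, ENNReal.ofReal (Metric.diam (Γ p.1.1 p.1.2) ^ s) := by
        simp_rw [key, ENNReal.tsum_mul_left, ← mul_assoc,
          ← ENNReal.ofReal_mul (by positivity : (0:ℝ) ≤ 1 / c ^ s)]
        rw [one_div, inv_mul_cancel₀ hcs.ne', ENNReal.ofReal_one, one_mul]
end

section
/- Let X, Y be metric spaces and α : X → Y a function between GF-spaces (X,ℱ) and (Y,𝒢) satisfying the Main hypotheses with c > 0 and d > 0, and let F ⊆ Y. Then diam(α⁻¹(F),Γ_n) → 0 as n → ∞ if and only if diam(F,Δ_n) → 0 as n → ∞. -/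
open Filter Set MeasureTheory
open scoped ENNReal NNReal Topology

lemma aux_sup_tendsto {ι : ℕ → Type*} (a b : ∀ n, ι n → ℝ)
    (ha : ∀ n i, 0 ≤ a n i) (hb : ∀ n i, 0 ≤ b n i)
    {c d : ℝ} (hc : 0 < c) (hd : 0 < d)
    (hrel : ∀ n i, (b n i) ^ d = c * a n i)
    (hA : Filter.Tendsto (fun n => ⨆ i, a n i) Filter.atTop (𝓝 0)) :
    Filter.Tendsto (fun n => ⨆ i, b n i) Filter.atTop (𝓝 0) := by
  have hsupa : ∀ n, 0 ≤ ⨆ i, a n i := fun n => Real.iSup_nonneg (ha n)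
  have hle : ∀ n, (⨆ i, b n i) ≤ (c * ⨆ i, a n i) ^ (1 / d) := by
    intro n
    have hRHS : 0 ≤ (c * ⨆ i, a n i) ^ (1 / d) :=
      Real.rpow_nonneg (mul_nonneg hc.le (hsupa n)) _
    rcases isEmpty_or_nonempty (ι n) with hne | hne
    · rw [iSup_of_empty', Real.sSup_empty]; exact hRHS
    by_cases hbb : BddAbove (Set.range (b n))
    · have habd : BddAbove (Set.range (a n)) := by
        obtain ⟨M, hM⟩ := hbb
        refine ⟨c⁻¹ * (max M 0) ^ d, ?_⟩
        rintro _ ⟨i, rfl⟩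
        have hbM : b n i ≤ max M 0 := le_trans (hM (Set.mem_range_self i)) (le_max_left _ _)
        have : a n i = c⁻¹ * (b n i) ^ d := by
          rw [hrel n i]; field_simp
        rw [this]
        exact mul_le_mul_of_nonneg_left
          (Real.rpow_le_rpow (hb n i) hbM hd.le) (by positivity)
      apply ciSup_le
      intro i
      have hbi : b n i = (c * a n i) ^ (1 / d) := by
        rw [← hrel n i, ← Real.rpow_mul (hb n i), mul_one_div_cancel hd.ne', Real.rpow_one]
      rw [hbi]
      exact Real.rpow_le_rpow (mul_nonneg hc.le (ha n i))
        (mul_le_mul_of_nonneg_left (le_ciSup habd i) hc.le) (by positivity)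
    · rw [Real.iSup_of_not_bddAbove hbb]; exact hRHS
  have hg : Filter.Tendsto (fun n => (c * ⨆ i, a n i) ^ (1 / d)) Filter.atTop (𝓝 0) := by
    have h1 : Filter.Tendsto (fun n => c * ⨆ i, a n i) Filter.atTop (𝓝 0) := by
      have := hA.const_mul c
      simpa using this
    have h2 : ContinuousAt (fun x : ℝ => x ^ (1 / d)) 0 :=
      Real.continuousAt_rpow_const 0 (1 / d) (Or.inr (by positivity))
    have := h2.tendsto.comp h1
    rw [Real.zero_rpow (by positivity : (1 : ℝ) / d ≠ 0)] at this
    exact this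
  exact squeeze_zero (fun n => Real.iSup_nonneg (hb n)) hle hg

/-- under the Main hypotheses with `c > 0` and `d > 0`, for every `F ⊆ Y`,
`diam(α⁻¹(F), Γ_n) → 0` if and only if `diam(F, Δ_n) → 0`. -/
theorem famDiam_preimage_tendsto_zero_iff {X Y : Type*} [MetricSpace X] [MetricSpace Y]
    {ι : ℕ → Type*} (Γ : ∀ n : ℕ, ι n → Set X) (α : X → Y)
    (hΓ : IsFractalStructure Γ)
    (hΔ : IsFractalStructure (fun n i => α '' Γ n i))
    (c d : ℝ) (hc : 0 < c) (hd : 0 < d)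
    (hdiam : ∀ (n : ℕ) (i : ι n), Metric.diam (α '' Γ n i) ^ d = c * Metric.diam (Γ n i))
    (F : Set Y) :
    Filter.Tendsto (fun n : ℕ => famDiam Γ n (α ⁻¹' F)) Filter.atTop (𝓝 0) ↔
      Filter.Tendsto (fun n : ℕ => famDiam (fun m i => α '' Γ m i) n F)
        Filter.atTop (𝓝 0) := by
  have hpq : ∀ (n : ℕ) (i : ι n),
      ((α '' Γ n i) ∩ F).Nonempty ↔ (Γ n i ∩ α ⁻¹' F).Nonempty := by
    intro n i
    constructor
    · rintro ⟨y, ⟨x, hx, rfl⟩, hyF⟩; exact ⟨x, hx, hyF⟩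
    · rintro ⟨x, hx, hxF⟩; exact ⟨α x, ⟨x, hx, rfl⟩, hxF⟩
  have hDelta : ∀ n, famDiam (fun m i => α '' Γ m i) n F =
      ⨆ i : {i : ι n // (Γ n i ∩ α ⁻¹' F).Nonempty}, Metric.diam (α '' Γ n i.1) := by
    intro n
    simp only [famDiam]
    exact (Equiv.subtypeEquivRight (hpq n)).iSup_congr (fun _ => rfl)
  have hGamma : ∀ n, famDiam Γ n (α ⁻¹' F) =
      ⨆ i : {i : ι n // (Γ n i ∩ α ⁻¹' F).Nonempty}, Metric.diam (Γ n i.1) := fun n => rfl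
  have hrev : ∀ (n : ℕ) (i : {i : ι n // (Γ n i ∩ α ⁻¹' F).Nonempty}),
      Metric.diam (Γ n i.1) ^ (1 / d) = (c ^ (-(1 / d))) * Metric.diam (α '' Γ n i.1) := by
    intro n i
    have h1 : Metric.diam (Γ n i.1) = c⁻¹ * Metric.diam (α '' Γ n i.1) ^ d := by
      rw [hdiam n i.1]; field_simp
    rw [h1, Real.mul_rpow (by positivity) (Real.rpow_nonneg Metric.diam_nonneg d),
      ← Real.rpow_mul Metric.diam_nonneg, mul_one_div_cancel hd.ne', Real.rpow_one,
      ← Real.rpow_neg_one c, ← Real.rpow_mul hc.le]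
    ring_nf
  constructor
  · intro h
    simp only [hDelta]
    exact aux_sup_tendsto (ι := fun n => {i : ι n // (Γ n i ∩ α ⁻¹' F).Nonempty})
      (fun n i => Metric.diam (Γ n i.1))
      (fun n i => Metric.diam (α '' Γ n i.1))
      (fun n i => Metric.diam_nonneg) (fun n i => Metric.diam_nonneg) hc hd
      (fun n i => hdiam n i.1) (by simpa only [hGamma] using h)
  · intro h
    simp only [hGamma]
    exact aux_sup_tendsto (ι := fun n => {i : ι n // (Γ n i ∩ α ⁻¹' F).Nonempty})
      (fun n i => Metric.diam (α '' Γ n i.1))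
      (fun n i => Metric.diam (Γ n i.1))
      (fun n i => Metric.diam_nonneg) (fun n i => Metric.diam_nonneg)
      (Real.rpow_pos_of_pos hc _) (by positivity : (0:ℝ) < 1 / d)
      (hrev) (by simpa only [hDelta] using h)
end
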